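/- Fix a sentence length n ≥ 1 and an offset bound M ≥ 1. The encoding procedure restricts to a bijection between the set of valid combinations of aspect sentiment triplets in which every triplet with target span (s,e) and opinion span (a,b) satisfies |a−s| ≤ M and |b−s| ≤ M, and the set of valid tag sequences of length n that use only tags from the M-bounded tag set (i.e., every occurring tag B^ε_{j,k} or S^ε_{j,k} satisfies |j| ≤ M and |k| ≤ M). In particular, the search space Y_{x,M} of the model with offset constraint M corresponds exactly to the M-bounded triplet combinations. -/
import Mathlib


/-- A sentiment polarity: `+`, `0`, `−`. -/
inductive Sentiment : Type
  | pos | neu | neg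
  deriving DecidableEq

/-- An aspect sentiment triplet: a target span `(ts, te)`, an opinion span `(os, oe)`,
and a sentiment polarity. Positions are integers. -/
structure Triplet : Type where
  ts : ℤ
  te : ℤ
  os : ℤ
  oe : ℤ
  sent : Sentiment
  deriving DecidableEq

/-- A triplet over a sentence of length `n`: both spans lie within `{1, …, n}`
(with start ≤ end). -/
def ValidTriplet (n : ℤ) (t : Triplet) : Prop :=
  1 ≤ t.ts ∧ t.ts ≤ t.te ∧ t.te ≤ n ∧ 1 ≤ t.os ∧ t.os ≤ t.oe ∧ t.oe ≤ n

/-- A valid combination of triplets over a sentence of length `n`: a finite set of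
triplets over the sentence whose target spans are pairwise disjoint. -/
def ValidCombination (n : ℤ) (C : Finset Triplet) : Prop :=
  (∀ t ∈ C, ValidTriplet n t) ∧
  ∀ t₁ ∈ C, ∀ t₂ ∈ C, t₁ ≠ t₂ → (t₁.te < t₂.ts ∨ t₂.te < t₁.ts)

/-- The position-aware tag set: `I`, `O`, `E` together with `B^ε_{j,k}` and
`S^ε_{j,k}` for each sentiment `ε` and integer offsets `j`, `k`. -/
inductive Tag : Type
  | I | O | E
  | B (ε : Sentiment) (j k : ℤ)
  | S (ε : Sentiment) (j k : ℤ)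
  deriving DecidableEq

/-- The five sub-tags of the `BIOES` scheme. -/
inductive SubTag : Type
  | B | I | O | E | S
  deriving DecidableEq

/-- The sub-tag of a position-aware tag: `B^ε_{j,k} ↦ B`, `S^ε_{j,k} ↦ S`, and
`I`, `O`, `E` map to themselves. -/
def Tag.sub : Tag → SubTag
  | .I => .I
  | .O => .O
  | .E => .E
  | .B _ _ _ => .B
  | .S _ _ _ => .S

/-- A valid tag sequence of length `n` (a tag sequence is modeled as a function
`ℤ → Tag` carrying the default tag `O` outside the sentence `{1, …, n}`):
(i) the sub-tag sequence is a well-formed `BIOES` sequence — every position with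
sub-tag `B` starts a (maximal) segment whose interior positions carry sub-tag `I`
and whose last position carries sub-tag `E`, and every position with sub-tag `I`
resp. `E` lies in the interior resp. at the end of such a segment (so `S` and `O`
occur only outside such segments); and
(ii) every tag `B^ε_{j,k}` or `S^ε_{j,k}` at a position `i` satisfies `j ≤ k`,
`1 ≤ i + j` and `i + k ≤ n`, i.e. the offsets designate a span `(i+j, i+k)`
inside the sentence. -/
def ValidTagSeq (n : ℤ) (y : ℤ → Tag) : Prop :=
  (∀ i : ℤ, i < 1 ∨ n < i → y i = Tag.O) ∧
  (∀ i : ℤ, 1 ≤ i → i ≤ n → (y i).sub = SubTag.B →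
      ∃ e, i < e ∧ e ≤ n ∧ (y e).sub = SubTag.E ∧
        ∀ m, i < m → m < e → (y m).sub = SubTag.I) ∧
  (∀ i : ℤ, 1 ≤ i → i ≤ n → (y i).sub = SubTag.I →
      ∃ s e, 1 ≤ s ∧ s < i ∧ i < e ∧ e ≤ n ∧ (y s).sub = SubTag.B ∧
        (y e).sub = SubTag.E ∧ ∀ m, s < m → m < e → (y m).sub = SubTag.I) ∧
  (∀ i : ℤ, 1 ≤ i → i ≤ n → (y i).sub = SubTag.E →
      ∃ s, 1 ≤ s ∧ s < i ∧ (y s).sub = SubTag.B ∧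
        ∀ m, s < m → m < i → (y m).sub = SubTag.I) ∧
  (∀ i : ℤ, ∀ ε : Sentiment, ∀ j k : ℤ, 1 ≤ i → i ≤ n →
      (y i = Tag.B ε j k ∨ y i = Tag.S ε j k) →
      j ≤ k ∧ 1 ≤ i + j ∧ i + k ≤ n)

/-- The encoding procedure, as a relation between a position `i` and the tag `g`
assigned to it: position `i` gets `S^ε_{a−s,b−s}` if some triplet has single-word
target `(s,e)` with `s = e = i`, opinion span `(a,b)` and sentiment `ε`;
`B^ε_{a−s,b−s}` if some triplet has target `(s,e)` with `s = i < e`, opinion span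
`(a,b)` and sentiment `ε`; `E` if some triplet has target `(s,e)` with `e = i > s`;
`I` if some triplet has target `(s,e)` with `s < i < e`; and `O` otherwise. -/
def EncodesAt (C : Finset Triplet) (i : ℤ) (g : Tag) : Prop :=
  (∃ t ∈ C, t.ts = i ∧ t.te = i ∧ g = Tag.S t.sent (t.os - t.ts) (t.oe - t.ts)) ∨
  (∃ t ∈ C, t.ts = i ∧ i < t.te ∧ g = Tag.B t.sent (t.os - t.ts) (t.oe - t.ts)) ∨
  (∃ t ∈ C, t.te = i ∧ t.ts < i ∧ g = Tag.E) ∨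
  (∃ t ∈ C, t.ts < i ∧ i < t.te ∧ g = Tag.I) ∨
  ((¬ ∃ t ∈ C, t.ts = i ∧ t.te = i) ∧ (¬ ∃ t ∈ C, t.ts = i ∧ i < t.te) ∧
   (¬ ∃ t ∈ C, t.te = i ∧ t.ts < i) ∧ (¬ ∃ t ∈ C, t.ts < i ∧ i < t.te) ∧
   g = Tag.O)

/-- `y` is the encoding of the combination `C`: at every position, the tag of `y`
is the one produced by the encoding procedure. -/
def Encodes (C : Finset Triplet) (y : ℤ → Tag) : Prop :=
  ∀ i : ℤ, EncodesAt C i (y i)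

/-- `t` is one of the triplets read off from the tag sequence `y` by the decoding
procedure: its target span `(s, e)` is a maximal `BIOES` target segment of `y`
(either a single position with an `S`-tag, or a segment starting with a `B`-tag,
ending with sub-tag `E`, with all interior sub-tags `I`), its opinion span is
`(s + j, s + k)` where `j, k` are the offsets carried by the initial tag, and its
sentiment is the `ε` carried by that same tag. -/
def DecodedTriplet (y : ℤ → Tag) (t : Triplet) : Prop :=
  (t.ts = t.te ∧ y t.ts = Tag.S t.sent (t.os - t.ts) (t.oe - t.ts)) ∨
  (t.ts < t.te ∧ y t.ts = Tag.B t.sent (t.os - t.ts) (t.oe - t.ts) ∧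
    (y t.te).sub = SubTag.E ∧ ∀ m, t.ts < m → m < t.te → (y m).sub = SubTag.I)

/-- `C` is the decoding of the tag sequence `y`: `C` consists exactly of the
triplets read off from the maximal `BIOES` target segments of `y`. -/
def DecodesTo (y : ℤ → Tag) (C : Finset Triplet) : Prop :=
  ∀ t : Triplet, t ∈ C ↔ DecodedTriplet y t

/-- An `M`-bounded valid combination: a valid combination in which every triplet
with target span `(s,e)` and opinion span `(a,b)` satisfies `|a − s| ≤ M` and
`|b − s| ≤ M`. -/
def MBoundedCombination (n M : ℤ) (C : Finset Triplet) : Prop :=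
  ValidCombination n C ∧ ∀ t ∈ C, |t.os - t.ts| ≤ M ∧ |t.oe - t.ts| ≤ M

/-- An `M`-bounded valid tag sequence: a valid tag sequence using only tags from
the `M`-bounded tag set, i.e. every occurring tag `B^ε_{j,k}` or `S^ε_{j,k}`
satisfies `|j| ≤ M` and `|k| ≤ M`. -/
def MBoundedTagSeq (n M : ℤ) (y : ℤ → Tag) : Prop :=
  ValidTagSeq n y ∧
  ∀ (i : ℤ) (ε : Sentiment) (j k : ℤ),
    (y i = Tag.B ε j k ∨ y i = Tag.S ε j k) → |j| ≤ M ∧ |k| ≤ M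

section Aux
open Classical

variable {n M : ℤ} {C : Finset Triplet} {y : ℤ → Tag}

lemma span_unique (hC : ValidCombination n C)
    {t t' : Triplet} (ht : t ∈ C) (ht' : t' ∈ C) {i : ℤ}
    (h1 : t.ts ≤ i) (h2 : i ≤ t.te) (h3 : t'.ts ≤ i) (h4 : i ≤ t'.te) : t = t' := by
  by_contra h
  rcases hC.2 t ht t' ht' h with h' | h' <;> omega

lemma Triplet.ext' {t t' : Triplet} (h1 : t.ts = t'.ts) (h2 : t.te = t'.te)
    (h3 : t.os = t'.os) (h4 : t.oe = t'.oe) (h5 : t.sent = t'.sent) : t = t' := by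
  cases t; cases t'; simp_all

lemma encodesAt_cases (hC : ValidCombination n C)
    {t : Triplet} (ht : t ∈ C) {i : ℤ} {g : Tag}
    (h1 : t.ts ≤ i) (h2 : i ≤ t.te) (h : EncodesAt C i g) :
    (t.ts = i ∧ t.te = i ∧ g = Tag.S t.sent (t.os - t.ts) (t.oe - t.ts)) ∨
    (t.ts = i ∧ i < t.te ∧ g = Tag.B t.sent (t.os - t.ts) (t.oe - t.ts)) ∨
    (t.te = i ∧ t.ts < i ∧ g = Tag.E) ∨
    (t.ts < i ∧ i < t.te ∧ g = Tag.I) := by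
  rcases h with ⟨t', ht', a, b, rfl⟩ | ⟨t', ht', a, b, rfl⟩ | ⟨t', ht', a, b, rfl⟩ |
    ⟨t', ht', a, b, rfl⟩ | ⟨c1, c2, c3, c4, rfl⟩
  · obtain rfl := span_unique hC ht' ht (by omega) (by omega) h1 h2
    exact Or.inl ⟨a, b, rfl⟩
  · obtain rfl := span_unique hC ht' ht (by omega) (by omega) h1 h2
    exact Or.inr (Or.inl ⟨a, b, rfl⟩)
  · obtain rfl := span_unique hC ht' ht (by omega) (by omega) h1 h2
    exact Or.inr (Or.inr (Or.inl ⟨a, b, rfl⟩))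
  · obtain rfl := span_unique hC ht' ht (by omega) (by omega) h1 h2
    exact Or.inr (Or.inr (Or.inr ⟨a, b, rfl⟩))
  · exfalso
    rcases eq_or_lt_of_le h1 with e1 | l1 <;> rcases eq_or_lt_of_le h2 with e2 | l2
    · exact c1 ⟨t, ht, e1, e2.symm⟩
    · exact c2 ⟨t, ht, e1, l2⟩
    · exact c3 ⟨t, ht, e2.symm, l1⟩
    · exact c4 ⟨t, ht, l1, l2⟩

lemma encodesAt_O {i : ℤ} {g : Tag}
    (hno : ∀ t ∈ C, i < t.ts ∨ t.te < i) (h : EncodesAt C i g) : g = Tag.O := by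
  rcases h with ⟨t, ht, a, b, rfl⟩ | ⟨t, ht, a, b, rfl⟩ | ⟨t, ht, a, b, rfl⟩ |
    ⟨t, ht, a, b, rfl⟩ | ⟨_, _, _, _, rfl⟩
  · rcases hno t ht with h | h <;> omega
  · rcases hno t ht with h | h <;> omega
  · rcases hno t ht with h | h <;> omega
  · rcases hno t ht with h | h <;> omega
  · rfl
lemma encodesAt_sub_S {i : ℤ} {g : Tag} (h : EncodesAt C i g) (hs : g.sub = SubTag.S) :
    ∃ t ∈ C, t.ts = i ∧ t.te = i ∧ g = Tag.S t.sent (t.os - t.ts) (t.oe - t.ts) := by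
  rcases h with ⟨t, ht, a, b, rfl⟩ | ⟨t, ht, a, b, rfl⟩ | ⟨t, ht, a, b, rfl⟩ |
    ⟨t, ht, a, b, rfl⟩ | ⟨_, _, _, _, rfl⟩ <;> first
    | exact ⟨t, ht, a, b, rfl⟩ | simp [Tag.sub] at hs

lemma encodesAt_sub_B {i : ℤ} {g : Tag} (h : EncodesAt C i g) (hs : g.sub = SubTag.B) :
    ∃ t ∈ C, t.ts = i ∧ i < t.te ∧ g = Tag.B t.sent (t.os - t.ts) (t.oe - t.ts) := by
  rcases h with ⟨t, ht, a, b, rfl⟩ | ⟨t, ht, a, b, rfl⟩ | ⟨t, ht, a, b, rfl⟩ |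
    ⟨t, ht, a, b, rfl⟩ | ⟨_, _, _, _, rfl⟩ <;> first
    | exact ⟨t, ht, a, b, rfl⟩ | simp [Tag.sub] at hs

lemma encodesAt_sub_E {i : ℤ} {g : Tag} (h : EncodesAt C i g) (hs : g.sub = SubTag.E) :
    ∃ t ∈ C, t.te = i ∧ t.ts < i ∧ g = Tag.E := by
  rcases h with ⟨t, ht, a, b, rfl⟩ | ⟨t, ht, a, b, rfl⟩ | ⟨t, ht, a, b, rfl⟩ |
    ⟨t, ht, a, b, rfl⟩ | ⟨_, _, _, _, rfl⟩ <;> first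
    | exact ⟨t, ht, a, b, rfl⟩ | simp [Tag.sub] at hs

lemma encodesAt_sub_I {i : ℤ} {g : Tag} (h : EncodesAt C i g) (hs : g.sub = SubTag.I) :
    ∃ t ∈ C, t.ts < i ∧ i < t.te ∧ g = Tag.I := by
  rcases h with ⟨t, ht, a, b, rfl⟩ | ⟨t, ht, a, b, rfl⟩ | ⟨t, ht, a, b, rfl⟩ |
    ⟨t, ht, a, b, rfl⟩ | ⟨_, _, _, _, rfl⟩ <;> first
    | exact ⟨t, ht, a, b, rfl⟩ | simp [Tag.sub] at hs

noncomputable def enc (C : Finset Triplet) (i : ℤ) : Tag :=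
  if h1 : ∃ t ∈ C, t.ts = i ∧ t.te = i then
    Tag.S h1.choose.sent (h1.choose.os - h1.choose.ts) (h1.choose.oe - h1.choose.ts)
  else if h2 : ∃ t ∈ C, t.ts = i ∧ i < t.te then
    Tag.B h2.choose.sent (h2.choose.os - h2.choose.ts) (h2.choose.oe - h2.choose.ts)
  else if ∃ t ∈ C, t.te = i ∧ t.ts < i then Tag.E
  else if ∃ t ∈ C, t.ts < i ∧ i < t.te then Tag.I
  else Tag.O

lemma encodes_enc (C : Finset Triplet) : Encodes C (enc C) := by
  intro i
  unfold enc
  split_ifs with h1 h2 h3 h4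
  · exact Or.inl ⟨h1.choose, h1.choose_spec.1, h1.choose_spec.2.1, h1.choose_spec.2.2, rfl⟩
  · exact Or.inr (Or.inl ⟨h2.choose, h2.choose_spec.1, h2.choose_spec.2.1,
      h2.choose_spec.2.2, rfl⟩)
  · obtain ⟨t, ht, a, b⟩ := h3
    exact Or.inr (Or.inr (Or.inl ⟨t, ht, a, b, rfl⟩))
  · obtain ⟨t, ht, a, b⟩ := h4
    exact Or.inr (Or.inr (Or.inr (Or.inl ⟨t, ht, a, b, rfl⟩)))
  · exact Or.inr (Or.inr (Or.inr (Or.inr ⟨h1, h2, h3, h4, rfl⟩)))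

lemma encodes_unique (hC : ValidCombination n C) {y y' : ℤ → Tag}
    (hy : Encodes C y) (hy' : Encodes C y') : y = y' := by
  funext i
  by_cases h : ∃ t ∈ C, t.ts ≤ i ∧ i ≤ t.te
  · obtain ⟨t, ht, h1, h2⟩ := h
    rcases encodesAt_cases hC ht h1 h2 (hy i) with ⟨a1, a2, a3⟩ | ⟨a1, a2, a3⟩ |
        ⟨a1, a2, a3⟩ | ⟨a1, a2, a3⟩ <;>
      rcases encodesAt_cases hC ht h1 h2 (hy' i) with ⟨b1, b2, b3⟩ | ⟨b1, b2, b3⟩ |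
        ⟨b1, b2, b3⟩ | ⟨b1, b2, b3⟩ <;>
      first | omega | rw [a3, b3]
  · push_neg at h
    have hno : ∀ t ∈ C, i < t.ts ∨ t.te < i := by
      intro t ht
      have := h t ht
      omega
    rw [encodesAt_O hno (hy i), encodesAt_O hno (hy' i)]
lemma valid_of_encodes (hC : MBoundedCombination n M C) (he : Encodes C y) :
    MBoundedTagSeq n M y := by
  have hV := hC.1
  have hO : ∀ i : ℤ, i < 1 ∨ n < i → y i = Tag.O := by
    intro i hi
    refine encodesAt_O (fun t ht => ?_) (he i)
    have := hV.1 t ht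
    unfold ValidTriplet at this
    omega
  refine ⟨⟨hO, ?_, ?_, ?_, ?_⟩, ?_⟩
  · -- B condition
    intro i _ _ hs
    obtain ⟨t, ht, hts, hlt, _⟩ := encodesAt_sub_B (he i) hs
    have hvt := hV.1 t ht
    refine ⟨t.te, by omega, hvt.2.2.1, ?_, ?_⟩
    · rcases encodesAt_cases hV ht (by omega) le_rfl (he t.te) with
        ⟨a, b, c⟩ | ⟨a, b, c⟩ | ⟨a, b, c⟩ | ⟨a, b, c⟩ <;> first | omega | (rw [c]; rfl)
    · intro m hm1 hm2
      rcases encodesAt_cases hV ht (by omega) (by omega) (he m) with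
        ⟨a, b, c⟩ | ⟨a, b, c⟩ | ⟨a, b, c⟩ | ⟨a, b, c⟩ <;> first | omega | (rw [c]; rfl)
  · -- I condition
    intro i _ _ hs
    obtain ⟨t, ht, h1, h2, _⟩ := encodesAt_sub_I (he i) hs
    have hvt := hV.1 t ht
    refine ⟨t.ts, t.te, hvt.1, h1, h2, hvt.2.2.1, ?_, ?_, ?_⟩
    · rcases encodesAt_cases hV ht le_rfl (by omega) (he t.ts) with
        ⟨a, b, c⟩ | ⟨a, b, c⟩ | ⟨a, b, c⟩ | ⟨a, b, c⟩ <;> first | omega | (rw [c]; rfl)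
    · rcases encodesAt_cases hV ht (by omega) le_rfl (he t.te) with
        ⟨a, b, c⟩ | ⟨a, b, c⟩ | ⟨a, b, c⟩ | ⟨a, b, c⟩ <;> first | omega | (rw [c]; rfl)
    · intro m hm1 hm2
      rcases encodesAt_cases hV ht (by omega) (by omega) (he m) with
        ⟨a, b, c⟩ | ⟨a, b, c⟩ | ⟨a, b, c⟩ | ⟨a, b, c⟩ <;> first | omega | (rw [c]; rfl)
  · -- E condition
    intro i _ _ hs
    obtain ⟨t, ht, h1, h2, _⟩ := encodesAt_sub_E (he i) hs
    have hvt := hV.1 t ht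
    refine ⟨t.ts, hvt.1, by omega, ?_, ?_⟩
    · rcases encodesAt_cases hV ht le_rfl (by omega) (he t.ts) with
        ⟨a, b, c⟩ | ⟨a, b, c⟩ | ⟨a, b, c⟩ | ⟨a, b, c⟩ <;> first | omega | (rw [c]; rfl)
    · intro m hm1 hm2
      rcases encodesAt_cases hV ht (by omega) (by omega) (he m) with
        ⟨a, b, c⟩ | ⟨a, b, c⟩ | ⟨a, b, c⟩ | ⟨a, b, c⟩ <;> first | omega | (rw [c]; rfl)
  · -- offset condition
    intro i ε j k _ _ hbs
    rcases hbs with hb | hb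
    · obtain ⟨t, ht, hts, _, htag⟩ := encodesAt_sub_B (he i) (by rw [hb]; rfl)
      rw [hb] at htag
      obtain ⟨-, hj, hk⟩ := Tag.B.inj htag.symm
      have hvt := hV.1 t ht
      unfold ValidTriplet at hvt
      omega
    · obtain ⟨t, ht, hts, _, htag⟩ := encodesAt_sub_S (he i) (by rw [hb]; rfl)
      rw [hb] at htag
      obtain ⟨-, hj, hk⟩ := Tag.S.inj htag.symm
      have hvt := hV.1 t ht
      unfold ValidTriplet at hvt
      omega
  · -- M bound
    intro i ε j k hbs
    have hrange : 1 ≤ i ∧ i ≤ n := by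
      by_contra hr
      rw [hO i (by omega)] at hbs
      rcases hbs with hb | hb <;> cases hb
    rcases hbs with hb | hb
    · obtain ⟨t, ht, hts, _, htag⟩ := encodesAt_sub_B (he i) (by rw [hb]; rfl)
      rw [hb] at htag
      obtain ⟨-, hj, hk⟩ := Tag.B.inj htag.symm
      have := hC.2 t ht
      constructor <;> (subst hj hk; first | exact this.1 | exact this.2)
    · obtain ⟨t, ht, hts, _, htag⟩ := encodesAt_sub_S (he i) (by rw [hb]; rfl)
      rw [hb] at htag
      obtain ⟨-, hj, hk⟩ := Tag.S.inj htag.symm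
      have := hC.2 t ht
      constructor <;> (subst hj hk; first | exact this.1 | exact this.2)
lemma mem_iff_decoded (hC : ValidCombination n C) (he : Encodes C y) (t : Triplet) :
    t ∈ C ↔ DecodedTriplet y t := by
  constructor
  · intro ht
    rcases eq_or_lt_of_le (hC.1 t ht).2.1 with heq | hlt
    · left
      refine ⟨heq, ?_⟩
      rcases encodesAt_cases hC ht le_rfl (by omega) (he t.ts) with
        ⟨a, b, c⟩ | ⟨a, b, c⟩ | ⟨a, b, c⟩ | ⟨a, b, c⟩ <;> first | omega | exact c
    · right
      refine ⟨hlt, ?_, ?_, ?_⟩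
      · rcases encodesAt_cases hC ht le_rfl (by omega) (he t.ts) with
          ⟨a, b, c⟩ | ⟨a, b, c⟩ | ⟨a, b, c⟩ | ⟨a, b, c⟩ <;> first | omega | exact c
      · rcases encodesAt_cases hC ht (by omega) le_rfl (he t.te) with
          ⟨a, b, c⟩ | ⟨a, b, c⟩ | ⟨a, b, c⟩ | ⟨a, b, c⟩ <;> first | omega | (rw [c]; rfl)
      · intro m h1 h2
        rcases encodesAt_cases hC ht (by omega) (by omega) (he m) with
          ⟨a, b, c⟩ | ⟨a, b, c⟩ | ⟨a, b, c⟩ | ⟨a, b, c⟩ <;> first | omega | (rw [c]; rfl)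
  · rintro (⟨hte, hS⟩ | ⟨hlt, hB, hE, hI⟩)
    · obtain ⟨t', ht', h1, h2, htag⟩ := encodesAt_sub_S (he t.ts) (by rw [hS]; rfl)
      rw [hS] at htag
      obtain ⟨hse, hj, hk⟩ := Tag.S.inj htag
      have : t = t' := Triplet.ext' h1.symm (by omega) (by omega) (by omega) hse
      rw [this]; exact ht'
    · obtain ⟨t', ht', h1, h2, htag⟩ := encodesAt_sub_B (he t.ts) (by rw [hB]; rfl)
      rw [hB] at htag
      obtain ⟨hse, hj, hk⟩ := Tag.B.inj htag
      -- show t'.te = t.te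
      have hEt' : y t'.te = Tag.E := by
        rcases encodesAt_cases hC ht' (by omega) le_rfl (he t'.te) with
          ⟨a, b, c⟩ | ⟨a, b, c⟩ | ⟨a, b, c⟩ | ⟨a, b, c⟩ <;> first | omega | exact c
      have htee : t'.te = t.te := by
        rcases lt_trichotomy t'.te t.te with h | h | h
        · have := hI t'.te (by omega) h
          rw [hEt'] at this
          cases this
        · exact h
        · have : (y t.te).sub = SubTag.I := by
            rcases encodesAt_cases hC ht' (by omega) (by omega) (he t.te) with
              ⟨a, b, c⟩ | ⟨a, b, c⟩ | ⟨a, b, c⟩ | ⟨a, b, c⟩ <;> first | omega | (rw [c]; rfl)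
          rw [hE] at this
          cases this
      have : t = t' := Triplet.ext' h1.symm htee.symm (by omega) (by omega) hse
      rw [this]; exact ht'
lemma decoded_validTriplet (hy : ValidTagSeq n y) {t : Triplet}
    (ht : DecodedTriplet y t) : ValidTriplet n t := by
  rcases ht with ⟨hte, hS⟩ | ⟨hlt, hB, hE, _⟩
  · have hr : 1 ≤ t.ts ∧ t.ts ≤ n := by
      by_contra h
      rw [hy.1 t.ts (by omega)] at hS
      cases hS
    have := hy.2.2.2.2 t.ts t.sent (t.os - t.ts) (t.oe - t.ts) hr.1 hr.2 (Or.inr hS)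
    unfold ValidTriplet
    omega
  · have hr : 1 ≤ t.ts ∧ t.ts ≤ n := by
      by_contra h
      rw [hy.1 t.ts (by omega)] at hB
      cases hB
    have hten : t.te ≤ n := by
      by_contra h
      rw [hy.1 t.te (by omega)] at hE
      cases hE
    have := hy.2.2.2.2 t.ts t.sent (t.os - t.ts) (t.oe - t.ts) hr.1 hr.2 (Or.inl hB)
    unfold ValidTriplet
    omega

noncomputable def decodeSet (n : ℤ) (y : ℤ → Tag) : Finset Triplet :=
  @Finset.filter _ (DecodedTriplet y) (Classical.decPred _)
    ((((Finset.Icc (1:ℤ) n) ×ˢ (Finset.Icc (1:ℤ) n) ×ˢ (Finset.Icc (1:ℤ) n) ×ˢ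
        (Finset.Icc (1:ℤ) n)) ×ˢ
      ({Sentiment.pos, Sentiment.neu, Sentiment.neg} : Finset Sentiment)).image
      (fun p => ⟨p.1.1, p.1.2.1, p.1.2.2.1, p.1.2.2.2, p.2⟩))

lemma mem_decodeSet (hy : ValidTagSeq n y) {t : Triplet} :
    t ∈ decodeSet n y ↔ DecodedTriplet y t := by
  constructor
  · intro h
    exact (Finset.mem_filter.mp h).2
  · intro hd
    have hv := decoded_validTriplet hy hd
    unfold ValidTriplet at hv
    refine Finset.mem_filter.mpr ⟨Finset.mem_image.mpr
      ⟨⟨⟨t.ts, t.te, t.os, t.oe⟩, t.sent⟩, ?_, rfl⟩, hd⟩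
    simp only [Finset.mem_product, Finset.mem_Icc, Finset.mem_insert, Finset.mem_singleton]
    refine ⟨⟨⟨hv.1, by omega⟩, ⟨by omega, hv.2.2.1⟩, ⟨hv.2.2.2.1, by omega⟩,
      ⟨by omega, hv.2.2.2.2.2⟩⟩, ?_⟩
    cases t.sent <;> simp

lemma decoded_start_lt {t₁ t₂ : Triplet} (h1 : DecodedTriplet y t₁)
    (h2 : DecodedTriplet y t₂) (hlt : t₁.ts < t₂.ts) (hle : t₂.ts ≤ t₁.te) : False := by
  have hsub : (y t₂.ts).sub = SubTag.S ∨ (y t₂.ts).sub = SubTag.B := by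
    rcases h2 with ⟨_, hS⟩ | ⟨_, hB, _, _⟩
    · left; rw [hS]; rfl
    · right; rw [hB]; rfl
  rcases h1 with ⟨hte, _⟩ | ⟨hlt1, _, hE, hI⟩
  · omega
  · rcases eq_or_lt_of_le hle with heq | hlt2
    · rw [heq] at hsub
      rcases hsub with h | h <;> rw [hE] at h <;> cases h
    · have := hI t₂.ts hlt hlt2
      rcases hsub with h | h <;> rw [this] at h <;> cases h

lemma decoded_same_start {t₁ t₂ : Triplet} (h1 : DecodedTriplet y t₁)
    (h2 : DecodedTriplet y t₂) (hts : t₁.ts = t₂.ts) : t₁ = t₂ := by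
  rcases h1 with ⟨he1, hS1⟩ | ⟨hl1, hB1, hE1, hI1⟩ <;>
    rcases h2 with ⟨he2, hS2⟩ | ⟨hl2, hB2, hE2, hI2⟩
  · rw [hts, hS2] at hS1
    obtain ⟨hse, hj, hk⟩ := Tag.S.inj hS1
    exact Triplet.ext' hts (by omega) (by omega) (by omega) hse.symm
  · rw [hts, hB2] at hS1
    cases hS1
  · rw [hts, hS2] at hB1
    cases hB1
  · rw [hts, hB2] at hB1
    obtain ⟨hse, hj, hk⟩ := Tag.B.inj hB1
    have hte : t₁.te = t₂.te := by
      rcases lt_trichotomy t₁.te t₂.te with h | h | h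
      · have := hI2 t₁.te (by omega) h
        rw [hE1] at this
        cases this
      · exact h
      · have := hI1 t₂.te (by omega) h
        rw [hE2] at this
        cases this
    exact Triplet.ext' hts hte (by omega) (by omega) hse.symm

lemma decoded_disjoint {t₁ t₂ : Triplet} (h1 : DecodedTriplet y t₁)
    (h2 : DecodedTriplet y t₂) (hne : t₁ ≠ t₂) : t₁.te < t₂.ts ∨ t₂.te < t₁.ts := by
  by_contra hcon
  push_neg at hcon
  rcases lt_trichotomy t₁.ts t₂.ts with h | h | h
  · exact decoded_start_lt h1 h2 h hcon.1
  · exact hne (decoded_same_start h1 h2 h)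
  · exact decoded_start_lt h2 h1 h hcon.2
lemma sub_B_exists {g : Tag} (h : g.sub = SubTag.B) : ∃ ε j k, g = Tag.B ε j k := by
  cases g <;> first | exact ⟨_, _, _, rfl⟩ | simp [Tag.sub] at h

lemma encodes_of_decodes (hy : ValidTagSeq n y) {C : Finset Triplet}
    (hmem : ∀ t, t ∈ C ↔ DecodedTriplet y t) : Encodes C y := by
  intro i
  have hbd : ∀ t ∈ C, 1 ≤ t.ts ∧ t.ts ≤ t.te ∧ t.te ≤ n := by
    intro t ht
    have := decoded_validTriplet hy ((hmem t).mp ht)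
    unfold ValidTriplet at this
    omega
  by_cases hr : 1 ≤ i ∧ i ≤ n
  · cases hyi : y i with
    | O =>
      refine Or.inr (Or.inr (Or.inr (Or.inr ⟨?_, ?_, ?_, ?_, rfl⟩)))
      · rintro ⟨t, ht, hts, hte⟩
        rcases (hmem t).mp ht with ⟨_, hS⟩ | ⟨hl, _, _, _⟩
        · rw [hts, hyi] at hS; cases hS
        · omega
      · rintro ⟨t, ht, hts, hlt⟩
        rcases (hmem t).mp ht with ⟨he, _⟩ | ⟨_, hB, _, _⟩
        · omega
        · rw [hts, hyi] at hB; cases hB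
      · rintro ⟨t, ht, hte, hlt⟩
        rcases (hmem t).mp ht with ⟨he, _⟩ | ⟨_, _, hE, _⟩
        · omega
        · rw [hte, hyi] at hE; cases hE
      · rintro ⟨t, ht, hlt1, hlt2⟩
        rcases (hmem t).mp ht with ⟨he, _⟩ | ⟨_, _, _, hI⟩
        · omega
        · have := hI i hlt1 hlt2
          rw [hyi] at this; cases this
    | S ε j k =>
      have hjk := hy.2.2.2.2 i ε j k hr.1 hr.2 (Or.inr hyi)
      have hd : DecodedTriplet y (⟨i, i, i + j, i + k, ε⟩ : Triplet) := by
        left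
        exact ⟨rfl, by show y i = Tag.S ε (i + j - i) (i + k - i); rw [hyi]; congr 1 <;> ring⟩
      exact Or.inl ⟨_, (hmem _).mpr hd, rfl, rfl, by simp⟩
    | B ε j k =>
      have hjk := hy.2.2.2.2 i ε j k hr.1 hr.2 (Or.inl hyi)
      obtain ⟨e, hie, hen, hEe, hIm⟩ := hy.2.1 i hr.1 hr.2 (by rw [hyi]; rfl)
      have hd : DecodedTriplet y (⟨i, e, i + j, i + k, ε⟩ : Triplet) := by
        right
        exact ⟨hie, by show y i = Tag.B ε (i + j - i) (i + k - i); rw [hyi]; congr 1 <;> ring,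
          hEe, hIm⟩
      exact Or.inr (Or.inl ⟨_, (hmem _).mpr hd, rfl, hie, by simp⟩)
    | E =>
      obtain ⟨s, hs1, hsi, hBs, hIm⟩ := hy.2.2.2.1 i hr.1 hr.2 (by rw [hyi]; rfl)
      obtain ⟨ε, j, k, hys⟩ := sub_B_exists hBs
      have hjk := hy.2.2.2.2 s ε j k hs1 (by omega) (Or.inl hys)
      have hd : DecodedTriplet y (⟨s, i, s + j, s + k, ε⟩ : Triplet) := by
        right
        exact ⟨hsi, by show y s = Tag.B ε (s + j - s) (s + k - s); rw [hys]; congr 1 <;> ring,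
          by show (y i).sub = SubTag.E; rw [hyi]; rfl, hIm⟩
      exact Or.inr (Or.inr (Or.inl ⟨_, (hmem _).mpr hd, rfl, hsi, rfl⟩))
    | I =>
      obtain ⟨s, e, hs1, hsi, hie, hen, hBs, hEe, hIm⟩ :=
        hy.2.2.1 i hr.1 hr.2 (by rw [hyi]; rfl)
      obtain ⟨ε, j, k, hys⟩ := sub_B_exists hBs
      have hjk := hy.2.2.2.2 s ε j k hs1 (by omega) (Or.inl hys)
      have hd : DecodedTriplet y (⟨s, e, s + j, s + k, ε⟩ : Triplet) := by
        right
        exact ⟨show s < e by omega,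
          by show y s = Tag.B ε (s + j - s) (s + k - s); rw [hys]; congr 1 <;> ring, hEe, hIm⟩
      exact Or.inr (Or.inr (Or.inr (Or.inl ⟨_, (hmem _).mpr hd, hsi, hie, rfl⟩)))
  · refine Or.inr (Or.inr (Or.inr (Or.inr ⟨?_, ?_, ?_, ?_, hy.1 i (by omega)⟩)))
    · rintro ⟨t, ht, hts, hte⟩
      have := hbd t ht; omega
    · rintro ⟨t, ht, hts, hlt⟩
      have := hbd t ht; omega
    · rintro ⟨t, ht, hte, hlt⟩
      have := hbd t ht; omega
    · rintro ⟨t, ht, h1, h2⟩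
      have := hbd t ht; omega
end Aux
/-- For a sentence length `n ≥ 1` and an offset bound `M ≥ 1`, the
encoding procedure restricts to a bijection between the `M`-bounded valid
combinations of triplets and the `M`-bounded valid tag sequences (the search
space `Y_{x,M}` of the model with offset constraint `M`). -/
theorem encoding_bijective_bounded (n M : ℤ) (hn : 1 ≤ n) (hM : 1 ≤ M) :
    ∃ F : {C : Finset Triplet // MBoundedCombination n M C} →
          {y : ℤ → Tag // MBoundedTagSeq n M y},
      (∀ C, Encodes C.1 (F C).1) ∧ Function.Bijective F := by
  refine ⟨fun C => ⟨enc C.1, valid_of_encodes C.2 (encodes_enc C.1)⟩,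
    fun C => encodes_enc C.1, ?_, ?_⟩
  · intro C₁ C₂ h
    have hyeq : enc C₁.1 = enc C₂.1 := congrArg Subtype.val h
    apply Subtype.ext
    apply Finset.ext
    intro t
    rw [mem_iff_decoded C₁.2.1 (encodes_enc C₁.1) t,
        mem_iff_decoded C₂.2.1 (encodes_enc C₂.1) t, hyeq]
  · rintro ⟨y, hy⟩
    have hmem : ∀ t, t ∈ decodeSet n y ↔ DecodedTriplet y t :=
      fun t => mem_decodeSet hy.1
    have hMC : MBoundedCombination n M (decodeSet n y) := by
      refine ⟨⟨fun t ht => decoded_validTriplet hy.1 ((hmem t).mp ht),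
        fun t₁ h₁ t₂ h₂ hne => decoded_disjoint ((hmem _).mp h₁) ((hmem _).mp h₂) hne⟩, ?_⟩
      intro t ht
      rcases (hmem t).mp ht with ⟨_, hS⟩ | ⟨_, hB, _, _⟩
      · exact hy.2 t.ts t.sent _ _ (Or.inr hS)
      · exact hy.2 t.ts t.sent _ _ (Or.inl hB)
    exact ⟨⟨decodeSet n y, hMC⟩,
      Subtype.ext (encodes_unique hMC.1 (encodes_enc _) (encodes_of_decodes hy.1 hmem))⟩
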